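/- Under the Markov assumption W − (X^i, Y^{i-1}) − Y_i for each i, the residual directed information I^R(X^n(W) → Y^n) := I(X^n → Y^n) − I(X^n → Y^n | W) is nonnegative, and it equals zero if and only if W and Y^n are independent. -/
import Mathlib


open Finset

namespace NFB

variable {Ω : Type*} [Fintype Ω]

/-- Probability that the finite random variable `X` (on finite sample space `Ω`
with weights `μ`) takes the value `a`. -/
noncomputable def pr (μ : Ω → ℝ) {α : Type*} [Fintype α] [DecidableEq α]
    (X : Ω → α) (a : α) : ℝ :=
  ∑ ω ∈ Finset.univ.filter (fun ω => X ω = a), μ ω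

/-- Conditional probability `p(X = a | Y = b)`. -/
noncomputable def condpr (μ : Ω → ℝ) {α β : Type*} [Fintype α] [DecidableEq α]
    [Fintype β] [DecidableEq β] (X : Ω → α) (Y : Ω → β) (a : α) (b : β) : ℝ :=
  pr μ (fun ω => (X ω, Y ω)) (a, b) / pr μ Y b

/-- Shannon entropy (base 2) of a finite random variable. -/
noncomputable def ent (μ : Ω → ℝ) {α : Type*} [Fintype α] [DecidableEq α]
    (X : Ω → α) : ℝ :=
  ∑ a : α, -(pr μ X a * Real.logb 2 (pr μ X a))

/-- Shannon entropy (base 2) of a distribution given directly as a weight function. -/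
noncomputable def entD {γ : Type*} [Fintype γ] (p : γ → ℝ) : ℝ :=
  ∑ c : γ, -(p c * Real.logb 2 (p c))

/-- Binary entropy function (base 2). -/
noncomputable def binent (a : ℝ) : ℝ :=
  -(a * Real.logb 2 a) - ((1 - a) * Real.logb 2 (1 - a))

/-- Conditional entropy `H(X | Y)`. -/
noncomputable def condent (μ : Ω → ℝ) {α β : Type*} [Fintype α] [DecidableEq α]
    [Fintype β] [DecidableEq β] (X : Ω → α) (Y : Ω → β) : ℝ :=
  ent μ (fun ω => (X ω, Y ω)) - ent μ Y

/-- Mutual information `I(X; Y)`. -/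
noncomputable def mi (μ : Ω → ℝ) {α β : Type*} [Fintype α] [DecidableEq α]
    [Fintype β] [DecidableEq β] (X : Ω → α) (Y : Ω → β) : ℝ :=
  ent μ X + ent μ Y - ent μ (fun ω => (X ω, Y ω))

/-- Conditional mutual information `I(X; Y | Z)`. -/
noncomputable def cmi (μ : Ω → ℝ) {α β γ : Type*} [Fintype α] [DecidableEq α]
    [Fintype β] [DecidableEq β] [Fintype γ] [DecidableEq γ]
    (X : Ω → α) (Y : Ω → β) (Z : Ω → γ) : ℝ :=
  condent μ X Z + condent μ Y Z - condent μ (fun ω => (X ω, Y ω)) Z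

/-- The length-`i` prefix of a sequence `x : Fin n → α`. -/
def pfx {α : Type*} {n : ℕ} (x : Fin n → α) (i : ℕ) (h : i ≤ n) : Fin i → α :=
  fun j => x (Fin.castLE h j)

/-- Directed information `I(Xⁿ → Yⁿ) = ∑ᵢ I(Xⁱ; Yᵢ | Yⁱ⁻¹)`. -/
noncomputable def dirinfo (μ : Ω → ℝ) {α β : Type*} [Fintype α] [DecidableEq α]
    [Fintype β] [DecidableEq β] {n : ℕ} (X : Ω → Fin n → α) (Y : Ω → Fin n → β) : ℝ :=
  ∑ i : Fin n, cmi μ (fun ω => pfx (X ω) (i.1 + 1) i.isLt)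
    (fun ω => Y ω i) (fun ω => pfx (Y ω) i.1 i.isLt.le)

/-- Conditional directed information `I(Xⁿ → Yⁿ | W) = ∑ᵢ I(Xⁱ; Yᵢ | Yⁱ⁻¹, W)`. -/
noncomputable def dirinfoCond (μ : Ω → ℝ) {α β γ : Type*} [Fintype α] [DecidableEq α]
    [Fintype β] [DecidableEq β] [Fintype γ] [DecidableEq γ]
    {n : ℕ} (X : Ω → Fin n → α) (Y : Ω → Fin n → β) (W : Ω → γ) : ℝ :=
  ∑ i : Fin n, cmi μ (fun ω => pfx (X ω) (i.1 + 1) i.isLt)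
    (fun ω => Y ω i) (fun ω => (pfx (Y ω) i.1 i.isLt.le, W ω))

/-- Causal conditional directed information
`I(Xⁿ → Yⁿ ‖ Zⁿ) = ∑ᵢ I(Xⁱ; Yᵢ | Yⁱ⁻¹, Zⁱ⁻¹)`. -/
noncomputable def dirinfoCausal (μ : Ω → ℝ) {α β γ : Type*} [Fintype α] [DecidableEq α]
    [Fintype β] [DecidableEq β] [Fintype γ] [DecidableEq γ]
    {n : ℕ} (X : Ω → Fin n → α) (Y : Ω → Fin n → β) (Z : Ω → Fin n → γ) : ℝ :=
  ∑ i : Fin n, cmi μ (fun ω => pfx (X ω) (i.1 + 1) i.isLt)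
    (fun ω => Y ω i) (fun ω => (pfx (Y ω) i.1 i.isLt.le, pfx (Z ω) i.1 i.isLt.le))

/-- Directed information from feedback to outputs
`I(Zⁿ⁻¹ → Yⁿ) = ∑ᵢ I(Zⁱ⁻¹; Yᵢ | Yⁱ⁻¹)`. -/
noncomputable def fbinfo (μ : Ω → ℝ) {ζ β : Type*} [Fintype ζ] [DecidableEq ζ]
    [Fintype β] [DecidableEq β] {n : ℕ} (Z : Ω → Fin n → ζ) (Y : Ω → Fin n → β) : ℝ :=
  ∑ i : Fin n, cmi μ (fun ω => pfx (Z ω) i.1 i.isLt.le)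
    (fun ω => Y ω i) (fun ω => pfx (Y ω) i.1 i.isLt.le)

lemma pr_nonneg (μ : Ω → ℝ) (hμ0 : ∀ ω, 0 ≤ μ ω) {α : Type*} [Fintype α] [DecidableEq α]
    (X : Ω → α) (a : α) : 0 ≤ pr μ X a :=
  Finset.sum_nonneg fun ω _ => hμ0 ω

lemma pr_comp_inj (μ : Ω → ℝ) {α β : Type*} [Fintype α] [DecidableEq α] [Fintype β]
    [DecidableEq β] (X : Ω → α) {g : α → β} (hg : Function.Injective g) (a : α) :
    pr μ (fun ω => g (X ω)) (g a) = pr μ X a := by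
  unfold pr
  congr 1
  ext ω
  simp [hg.eq_iff]

lemma pr_comp_notin (μ : Ω → ℝ) {α β : Type*} [Fintype α] [DecidableEq α] [Fintype β]
    [DecidableEq β] (X : Ω → α) {g : α → β} {c : β} (hc : ∀ a, g a ≠ c) :
    pr μ (fun ω => g (X ω)) c = 0 := by
  unfold pr
  rw [Finset.filter_false_of_mem fun ω _ => hc (X ω), Finset.sum_empty]

lemma ent_comp_inj (μ : Ω → ℝ) {α β : Type*} [Fintype α] [DecidableEq α] [Fintype β]
    [DecidableEq β] (X : Ω → α) {g : α → β} (hg : Function.Injective g) :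
    ent μ (fun ω => g (X ω)) = ent μ X := by
  unfold ent
  rw [← Finset.sum_subset (Finset.subset_univ (Finset.univ.image g))]
  · rw [Finset.sum_image (fun a _ a' _ h => hg h)]
    exact Finset.sum_congr rfl fun a _ => by rw [pr_comp_inj μ X hg]
  · intro b _ hb
    have hc : ∀ a, g a ≠ b := fun a hab => hb (Finset.mem_image.mpr ⟨a, Finset.mem_univ a, hab⟩)
    rw [pr_comp_notin μ X hc]
    simp

lemma pr_pair_fst (μ : Ω → ℝ) {α β : Type*} [Fintype α] [DecidableEq α] [Fintype β]
    [DecidableEq β] (X : Ω → α) (Y : Ω → β) (a : α) :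
    ∑ b : β, pr μ (fun ω => (X ω, Y ω)) (a, b) = pr μ X a := by
  unfold pr
  simp only [Finset.sum_filter]
  rw [Finset.sum_comm]
  refine Finset.sum_congr rfl fun ω _ => ?_
  by_cases h : X ω = a
  · simp [h, Prod.ext_iff]
  · simp [h, Prod.ext_iff]

lemma pr_pair_snd (μ : Ω → ℝ) {α β : Type*} [Fintype α] [DecidableEq α] [Fintype β]
    [DecidableEq β] (X : Ω → α) (Y : Ω → β) (b : β) :
    ∑ a : α, pr μ (fun ω => (X ω, Y ω)) (a, b) = pr μ Y b := by
  unfold pr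
  simp only [Finset.sum_filter]
  rw [Finset.sum_comm]
  refine Finset.sum_congr rfl fun ω _ => ?_
  by_cases h : Y ω = b
  · simp [h, Prod.ext_iff]
  · simp [h, Prod.ext_iff]

lemma pr_sum_one (μ : Ω → ℝ) (hμ1 : ∑ ω, μ ω = 1) {α : Type*} [Fintype α] [DecidableEq α]
    (X : Ω → α) : ∑ a : α, pr μ X a = 1 := by
  unfold pr
  simp only [Finset.sum_filter]
  rw [Finset.sum_comm]
  simpa using hμ1

lemma pr_pair_le_fst (μ : Ω → ℝ) (hμ0 : ∀ ω, 0 ≤ μ ω) {α β : Type*} [Fintype α]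
    [DecidableEq α] [Fintype β] [DecidableEq β] (X : Ω → α) (Y : Ω → β) (a : α) (b : β) :
    pr μ (fun ω => (X ω, Y ω)) (a, b) ≤ pr μ X a := by
  unfold pr
  apply Finset.sum_le_sum_of_subset_of_nonneg
  · intro ω hω
    simp only [Finset.mem_filter, Prod.mk.injEq] at hω ⊢
    exact ⟨hω.1, hω.2.1⟩
  · exact fun ω _ _ => hμ0 ω

lemma pr_pair_le_snd (μ : Ω → ℝ) (hμ0 : ∀ ω, 0 ≤ μ ω) {α β : Type*} [Fintype α]
    [DecidableEq α] [Fintype β] [DecidableEq β] (X : Ω → α) (Y : Ω → β) (a : α) (b : β) :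
    pr μ (fun ω => (X ω, Y ω)) (a, b) ≤ pr μ Y b := by
  unfold pr
  apply Finset.sum_le_sum_of_subset_of_nonneg
  · intro ω hω
    simp only [Finset.mem_filter, Prod.mk.injEq] at hω ⊢
    exact ⟨hω.1, hω.2.2⟩
  · exact fun ω _ _ => hμ0 ω

lemma mi_eq_sum (μ : Ω → ℝ) {α β : Type*} [Fintype α] [DecidableEq α] [Fintype β]
    [DecidableEq β] (X : Ω → α) (Y : Ω → β) :
    mi μ X Y = ∑ a : α, ∑ b : β,
      pr μ (fun ω => (X ω, Y ω)) (a, b) *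
        (Real.logb 2 (pr μ (fun ω => (X ω, Y ω)) (a, b))
          - Real.logb 2 (pr μ X a) - Real.logb 2 (pr μ Y b)) := by
  unfold mi ent
  rw [Fintype.sum_prod_type]
  have hX : ∑ a : α, -(pr μ X a * Real.logb 2 (pr μ X a))
      = ∑ a : α, ∑ b : β, -(pr μ (fun ω => (X ω, Y ω)) (a, b) * Real.logb 2 (pr μ X a)) := by
    refine Finset.sum_congr rfl fun a _ => ?_
    rw [Finset.sum_neg_distrib, ← Finset.sum_mul, pr_pair_fst]
  have hY : ∑ b : β, -(pr μ Y b * Real.logb 2 (pr μ Y b))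
      = ∑ a : α, ∑ b : β, -(pr μ (fun ω => (X ω, Y ω)) (a, b) * Real.logb 2 (pr μ Y b)) := by
    rw [Finset.sum_comm]
    refine Finset.sum_congr rfl fun b _ => ?_
    rw [Finset.sum_neg_distrib, ← Finset.sum_mul, pr_pair_snd]
  rw [hX, hY, ← Finset.sum_add_distrib, ← Finset.sum_sub_distrib]
  refine Finset.sum_congr rfl fun a _ => ?_
  rw [← Finset.sum_add_distrib, ← Finset.sum_sub_distrib]
  refine Finset.sum_congr rfl fun b _ => ?_
  ring

lemma mi_key (μ : Ω → ℝ) (hμ0 : ∀ ω, 0 ≤ μ ω) (hμ1 : ∑ ω, μ ω = 1)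
    {α β : Type*} [Fintype α] [DecidableEq α] [Fintype β] [DecidableEq β]
    (X : Ω → α) (Y : Ω → β) :
    0 ≤ mi μ X Y ∧ (mi μ X Y = 0 ↔
      ∀ a b, pr μ (fun ω => (X ω, Y ω)) (a, b) = pr μ X a * pr μ Y b) := by
  classical
  set p : α → β → ℝ := fun a b => pr μ (fun ω => (X ω, Y ω)) (a, b) with hpdef
  have hp0 : ∀ a b, 0 ≤ p a b := fun a b => pr_nonneg μ hμ0 _ _
  have hXa0 : ∀ a, 0 ≤ pr μ X a := fun a => pr_nonneg μ hμ0 _ _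
  have hYb0 : ∀ b, 0 ≤ pr μ Y b := fun b => pr_nonneg μ hμ0 _ _
  have hpleX : ∀ a b, p a b ≤ pr μ X a := fun a b => pr_pair_le_fst μ hμ0 X Y a b
  have hpleY : ∀ a b, p a b ≤ pr μ Y b := fun a b => pr_pair_le_snd μ hμ0 X Y a b
  set q : α → β → ℝ := fun a b => pr μ X a * pr μ Y b with hqdef
  have hq0 : ∀ a b, 0 ≤ q a b := fun a b => mul_nonneg (hXa0 a) (hYb0 b)
  have hqpos : ∀ a b, 0 < p a b → 0 < q a b := by
    intro a b hpab
    exact mul_pos (lt_of_lt_of_le hpab (hpleX a b)) (lt_of_lt_of_le hpab (hpleY a b))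
  have hsump : ∑ a : α, ∑ b : β, p a b = 1 := by
    rw [Finset.sum_congr rfl fun a _ => pr_pair_fst μ X Y a]
    exact pr_sum_one μ hμ1 X
  have hsumq : ∑ a : α, ∑ b : β, q a b = 1 := by
    simp only [hqdef, ← Finset.mul_sum, ← Finset.sum_mul]
    rw [pr_sum_one μ hμ1 X, pr_sum_one μ hμ1 Y, one_mul]
  set F : α → β → ℝ := fun a b =>
    q a b - p a b + p a b * (Real.log (p a b) - Real.log (q a b)) with hFdef
  have hlog2 : (0:ℝ) < Real.log 2 := Real.log_pos one_lt_two
  have hF0 : ∀ a b, 0 ≤ F a b := by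
    intro a b
    rcases eq_or_lt_of_le (hp0 a b) with h | h
    · simp [hFdef, ← h, hq0 a b]
    · have hq' : 0 < q a b := hqpos a b h
      have hl := Real.log_le_sub_one_of_pos (div_pos hq' h)
      rw [Real.log_div (ne_of_gt hq') (ne_of_gt h)] at hl
      have h2 : p a b * (Real.log (q a b) - Real.log (p a b)) ≤ q a b - p a b := by
        have := mul_le_mul_of_nonneg_left hl (le_of_lt h)
        calc p a b * (Real.log (q a b) - Real.log (p a b))
            ≤ p a b * (q a b / p a b - 1) := this
          _ = q a b - p a b := by field_simp
      simp only [hFdef]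
      nlinarith
  have hFstrict : ∀ a b, F a b = 0 → p a b = q a b := by
    intro a b hF
    by_contra hne
    rcases eq_or_lt_of_le (hp0 a b) with h | h
    · have : q a b = 0 := by simpa [hFdef, ← h] using hF
      exact hne (by rw [← h, this])
    · have hq' : 0 < q a b := hqpos a b h
      have hne1 : q a b / p a b ≠ 1 := fun hh =>
        hne ((div_eq_one_iff_eq (ne_of_gt h)).mp hh).symm
      have hl := Real.log_lt_sub_one_of_pos (div_pos hq' h) hne1
      rw [Real.log_div (ne_of_gt hq') (ne_of_gt h)] at hl
      have h2 : p a b * (Real.log (q a b) - Real.log (p a b)) < q a b - p a b := by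
        have := mul_lt_mul_of_pos_left hl h
        calc p a b * (Real.log (q a b) - Real.log (p a b))
            < p a b * (q a b / p a b - 1) := this
          _ = q a b - p a b := by field_simp
      have : 0 < F a b := by simp only [hFdef]; nlinarith
      linarith [this, hF.le, hF.ge]
  have hsumF : ∑ a : α, ∑ b : β, F a b = mi μ X Y * Real.log 2 := by
    have hterm : ∀ a b, F a b = (q a b - p a b)
        + (p a b * (Real.logb 2 (p a b) - Real.logb 2 (pr μ X a) - Real.logb 2 (pr μ Y b)))
          * Real.log 2 := by
      intro a b
      rcases eq_or_lt_of_le (hp0 a b) with h | h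
      · simp [hFdef, ← h]
      · have hq' : 0 < q a b := hqpos a b h
        have hXa : 0 < pr μ X a := lt_of_lt_of_le h (hpleX a b)
        have hYb : 0 < pr μ Y b := lt_of_lt_of_le h (hpleY a b)
        have hq : Real.log (q a b) = Real.log (pr μ X a) + Real.log (pr μ Y b) :=
          Real.log_mul (ne_of_gt hXa) (ne_of_gt hYb)
        have key : ∀ x y z : ℝ,
            (x / Real.log 2 - y / Real.log 2 - z / Real.log 2) * Real.log 2
              = x - y - z := by
          intro x y z
          field_simp
        simp only [hFdef, Real.logb, hq]
        rw [mul_assoc, key]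
        ring
    rw [Finset.sum_congr rfl fun a _ => Finset.sum_congr rfl fun b _ => hterm a b]
    simp only [Finset.sum_add_distrib, Finset.sum_sub_distrib]
    rw [hsump, hsumq]
    have hSS : ∑ a : α, ∑ b : β, (p a b *
          (Real.logb 2 (p a b) - Real.logb 2 (pr μ X a) - Real.logb 2 (pr μ Y b)))
            * Real.log 2
        = (∑ a : α, ∑ b : β, p a b *
          (Real.logb 2 (p a b) - Real.logb 2 (pr μ X a) - Real.logb 2 (pr μ Y b)))
            * Real.log 2 := by
      rw [Finset.sum_mul]
      exact Finset.sum_congr rfl fun a _ => (Finset.sum_mul _ _ _).symm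
    rw [hSS, ← mi_eq_sum μ X Y]
    ring
  have hFsum0 : 0 ≤ ∑ a : α, ∑ b : β, F a b :=
    Finset.sum_nonneg fun a _ => Finset.sum_nonneg fun b _ => hF0 a b
  have hmi0 : 0 ≤ mi μ X Y := by nlinarith [hFsum0, hsumF, hlog2]
  refine ⟨hmi0, ?_, ?_⟩
  · intro hmi
    have hz : ∑ a : α, ∑ b : β, F a b = 0 := by rw [hsumF, hmi, zero_mul]
    have hall : ∀ a ∈ (Finset.univ : Finset α), ∑ b : β, F a b = 0 :=
      (Finset.sum_eq_zero_iff_of_nonneg fun a _ =>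
        Finset.sum_nonneg fun b _ => hF0 a b).mp hz
    intro a b
    have hz2 : ∀ b ∈ (Finset.univ : Finset β), F a b = 0 :=
      (Finset.sum_eq_zero_iff_of_nonneg fun b _ => hF0 a b).mp (hall a (Finset.mem_univ a))
    exact hFstrict a b (hz2 b (Finset.mem_univ b))
  · intro hfac
    rw [mi_eq_sum μ X Y]
    refine Finset.sum_eq_zero fun a _ => Finset.sum_eq_zero fun b _ => ?_
    rcases eq_or_lt_of_le (hp0 a b) with h | h
    · have h0 : pr μ (fun ω => (X ω, Y ω)) (a, b) = 0 := h.symm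
      rw [h0, zero_mul]
    · have hXa : 0 < pr μ X a := lt_of_lt_of_le h (hpleX a b)
      have hYb : 0 < pr μ Y b := lt_of_lt_of_le h (hpleY a b)
      have : pr μ (fun ω => (X ω, Y ω)) (a, b) = pr μ X a * pr μ Y b := hfac a b
      rw [this, Real.logb_mul (ne_of_gt hXa) (ne_of_gt hYb)]
      ring_nf

lemma ent_split0 (μ : Ω → ℝ) {β : Type*} [Fintype β] [DecidableEq β] {m : ℕ}
    (A : Ω → Fin (m + 1) → β) :
    ent μ (fun ω => (A ω (Fin.last m), fun j : Fin m => A ω j.castSucc)) = ent μ A := by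
  have hg : Function.Injective (fun y : Fin (m + 1) → β =>
      (y (Fin.last m), fun j : Fin m => y j.castSucc)) := by
    intro y y' h
    simp only [Prod.mk.injEq] at h
    funext k
    induction k using Fin.lastCases with
    | last => exact h.1
    | cast j => exact congrFun h.2 j
  exact ent_comp_inj (g := fun y : Fin (m + 1) → β =>
    (y (Fin.last m), fun j : Fin m => y j.castSucc)) μ A hg

lemma ent_split (μ : Ω → ℝ) {β δ : Type*} [Fintype β] [DecidableEq β] [Fintype δ]
    [DecidableEq δ] {m : ℕ} (A : Ω → Fin (m + 1) → β) (B : Ω → δ) :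
    ent μ (fun ω => (A ω (Fin.last m), (fun j : Fin m => A ω j.castSucc, B ω)))
      = ent μ (fun ω => (A ω, B ω)) := by
  have hg : Function.Injective (fun yz : (Fin (m + 1) → β) × δ =>
      (yz.1 (Fin.last m), (fun j : Fin m => yz.1 j.castSucc, yz.2))) := by
    rintro ⟨y, z⟩ ⟨y', z'⟩ h
    simp only [Prod.mk.injEq] at h ⊢
    refine ⟨?_, h.2.2⟩
    funext k
    induction k using Fin.lastCases with
    | last => exact h.1
    | cast j => exact congrFun h.2.1 j
  exact ent_comp_inj (g := fun yz : (Fin (m + 1) → β) × δ =>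
    (yz.1 (Fin.last m), (fun j : Fin m => yz.1 j.castSucc, yz.2))) μ (fun ω => (A ω, B ω)) hg

lemma ent_reorder3 (μ : Ω → ℝ) {α β δ : Type*} [Fintype α] [DecidableEq α] [Fintype β]
    [DecidableEq β] [Fintype δ] [DecidableEq δ] (A : Ω → α) (B : Ω → β) (C : Ω → δ) :
    ent μ (fun ω => ((A ω, B ω), C ω)) = ent μ (fun ω => (B ω, (A ω, C ω))) := by
  have hg : Function.Injective (fun p : β × (α × δ) => ((p.2.1, p.1), p.2.2)) := by
    rintro ⟨b, a, d⟩ ⟨b', a', d'⟩ h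
    simp only [Prod.mk.injEq] at h ⊢
    tauto
  exact ent_comp_inj (g := fun p : β × (α × δ) => ((p.2.1, p.1), p.2.2)) μ
    (fun ω => (B ω, (A ω, C ω))) hg

lemma ent_swap (μ : Ω → ℝ) {α β : Type*} [Fintype α] [DecidableEq α] [Fintype β]
    [DecidableEq β] (A : Ω → α) (B : Ω → β) :
    ent μ (fun ω => (A ω, B ω)) = ent μ (fun ω => (B ω, A ω)) := by
  have hg : Function.Injective (fun p : β × α => (p.2, p.1)) := by
    rintro ⟨b, a⟩ ⟨b', a'⟩ h
    simp only [Prod.mk.injEq] at h ⊢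
    tauto
  exact ent_comp_inj (g := fun p : β × α => (p.2, p.1)) μ (fun ω => (B ω, A ω)) hg

lemma ent_subsingleton (μ : Ω → ℝ) (hμ1 : ∑ ω, μ ω = 1) {α : Type*} [Fintype α]
    [DecidableEq α] [Subsingleton α] (X : Ω → α) : ent μ X = 0 := by
  unfold ent pr
  apply Finset.sum_eq_zero
  intro a _
  have hfil : Finset.univ.filter (fun ω => X ω = a) = Finset.univ :=
    Finset.filter_true_of_mem fun ω _ => Subsingleton.elim _ _
  rw [hfil, hμ1]
  simp

lemma ent_pair_subsingleton (μ : Ω → ℝ) {α β : Type*} [Fintype α] [DecidableEq α]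
    [Subsingleton α] [Fintype β] [DecidableEq β] (A : Ω → α) (B : Ω → β) :
    ent μ (fun ω => (A ω, B ω)) = ent μ B := by
  classical
  by_cases hΩ : Nonempty Ω
  · have a0 : α := A (Classical.choice hΩ)
    have hg : Function.Injective (fun b : β => (a0, b)) := fun b b' h => by
      simpa using h
    have he : (fun ω => (A ω, B ω)) = fun ω => (a0, B ω) := by
      funext ω
      exact congrArg (fun a => (a, B ω)) (Subsingleton.elim _ _)
    rw [he]
    exact ent_comp_inj (g := fun b : β => (a0, b)) μ B hg
  · have hE : IsEmpty Ω := not_nonempty_iff.mp hΩ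
    have hz1 : ent μ (fun ω => (A ω, B ω)) = 0 := by
      simp [ent, pr, Finset.univ_eq_empty]
    have hz2 : ent μ B = 0 := by
      simp [ent, pr, Finset.univ_eq_empty]
    exact hz1.trans hz2.symm

lemma step_eq (μ : Ω → ℝ) {α β γ : Type*} [Fintype α] [DecidableEq α] [Fintype β]
    [DecidableEq β] [Fintype γ] [DecidableEq γ]
    {n : ℕ} (W : Ω → γ) (X : Ω → Fin n → α) (Y : Ω → Fin n → β) (i : Fin n)
    (hM : condent μ (fun ω => Y ω i)
          (fun ω => (pfx (X ω) (i.1 + 1) i.isLt, pfx (Y ω) i.1 i.isLt.le, W ω))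
      = condent μ (fun ω => Y ω i)
          (fun ω => (pfx (X ω) (i.1 + 1) i.isLt, pfx (Y ω) i.1 i.isLt.le))) :
    cmi μ (fun ω => pfx (X ω) (i.1 + 1) i.isLt) (fun ω => Y ω i)
        (fun ω => pfx (Y ω) i.1 i.isLt.le)
      - cmi μ (fun ω => pfx (X ω) (i.1 + 1) i.isLt) (fun ω => Y ω i)
        (fun ω => (pfx (Y ω) i.1 i.isLt.le, W ω))
    = (ent μ (fun ω => pfx (Y ω) (i.1 + 1) i.isLt)
        - ent μ (fun ω => pfx (Y ω) i.1 i.isLt.le))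
      - (ent μ (fun ω => (pfx (Y ω) (i.1 + 1) i.isLt, W ω))
        - ent μ (fun ω => (pfx (Y ω) i.1 i.isLt.le, W ω))) := by
  have e1 : ent μ (fun ω => (Y ω i, pfx (Y ω) i.1 i.isLt.le))
      = ent μ (fun ω => pfx (Y ω) (i.1 + 1) i.isLt) :=
    ent_split0 μ (fun ω => pfx (Y ω) (i.1 + 1) i.isLt)
  have e2 : ent μ (fun ω => (Y ω i, (pfx (Y ω) i.1 i.isLt.le, W ω)))
      = ent μ (fun ω => (pfx (Y ω) (i.1 + 1) i.isLt, W ω)) :=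
    ent_split μ (fun ω => pfx (Y ω) (i.1 + 1) i.isLt) W
  have e3 : ent μ (fun ω => ((pfx (X ω) (i.1 + 1) i.isLt, Y ω i), pfx (Y ω) i.1 i.isLt.le))
      = ent μ (fun ω => (Y ω i, (pfx (X ω) (i.1 + 1) i.isLt, pfx (Y ω) i.1 i.isLt.le))) :=
    ent_reorder3 μ _ _ _
  have e4 : ent μ (fun ω =>
        ((pfx (X ω) (i.1 + 1) i.isLt, Y ω i), (pfx (Y ω) i.1 i.isLt.le, W ω)))
      = ent μ (fun ω =>
        (Y ω i, (pfx (X ω) (i.1 + 1) i.isLt, pfx (Y ω) i.1 i.isLt.le, W ω))) :=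
    ent_reorder3 μ _ _ _
  simp only [cmi, condent] at hM ⊢
  linarith [hM, e1, e2, e3, e4]

noncomputable def cfun (μ : Ω → ℝ) {β γ : Type*} [Fintype β] [DecidableEq β] [Fintype γ]
    [DecidableEq γ] {n : ℕ} (W : Ω → γ) (Y : Ω → Fin n → β) (k : ℕ) : ℝ :=
  if h : k ≤ n then
    ent μ (fun ω => pfx (Y ω) k h) - ent μ (fun ω => (pfx (Y ω) k h, W ω))
  else 0

lemma cfun_le (μ : Ω → ℝ) {β γ : Type*} [Fintype β] [DecidableEq β] [Fintype γ]
    [DecidableEq γ] {n : ℕ} (W : Ω → γ) (Y : Ω → Fin n → β) (k : ℕ) (h : k ≤ n) :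
    cfun μ W Y k
      = ent μ (fun ω => pfx (Y ω) k h) - ent μ (fun ω => (pfx (Y ω) k h, W ω)) :=
  dif_pos h

/-- under the Markov chain `W − (Xⁱ, Yⁱ⁻¹) − Yᵢ`, the residual
directed information `I(Xⁿ → Yⁿ) − I(Xⁿ → Yⁿ | W)` is nonnegative, and it is
zero iff `W` and `Yⁿ` are independent. -/
theorem stmt3 {Ω : Type*} [Fintype Ω] (μ : Ω → ℝ)
    (hμ0 : ∀ ω, 0 ≤ μ ω) (hμ1 : ∑ ω, μ ω = 1)
    {α β γ : Type*} [Fintype α] [DecidableEq α] [Fintype β] [DecidableEq β]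
    [Fintype γ] [DecidableEq γ]
    {n : ℕ} (W : Ω → γ) (X : Ω → Fin n → α) (Y : Ω → Fin n → β)
    (hMarkov : ∀ i : Fin n,
      condent μ (fun ω => Y ω i)
          (fun ω => (pfx (X ω) (i.1 + 1) i.isLt, pfx (Y ω) i.1 i.isLt.le, W ω))
      = condent μ (fun ω => Y ω i)
          (fun ω => (pfx (X ω) (i.1 + 1) i.isLt, pfx (Y ω) i.1 i.isLt.le))) :
    0 ≤ dirinfo μ X Y - dirinfoCond μ X Y W ∧
    (dirinfo μ X Y - dirinfoCond μ X Y W = 0 ↔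
      ∀ (w : γ) (y : Fin n → β),
        pr μ (fun ω => (W ω, Y ω)) (w, y) = pr μ W w * pr μ Y y) := by
  have hsum : dirinfo μ X Y - dirinfoCond μ X Y W = mi μ W Y := by
    unfold dirinfo dirinfoCond
    rw [← Finset.sum_sub_distrib]
    rw [Finset.sum_congr rfl fun i _ => step_eq μ W X Y i (hMarkov i)]
    have hterm : ∀ i : Fin n,
        (ent μ (fun ω => pfx (Y ω) (i.1 + 1) i.isLt)
            - ent μ (fun ω => pfx (Y ω) i.1 i.isLt.le))
          - (ent μ (fun ω => (pfx (Y ω) (i.1 + 1) i.isLt, W ω))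
            - ent μ (fun ω => (pfx (Y ω) i.1 i.isLt.le, W ω)))
        = cfun μ W Y (i.1 + 1) - cfun μ W Y i.1 := by
      intro i
      rw [cfun_le μ W Y (i.1 + 1) i.isLt, cfun_le μ W Y i.1 i.isLt.le]
      ring
    rw [Finset.sum_congr rfl fun i _ => hterm i]
    rw [Fin.sum_univ_eq_sum_range (fun k => cfun μ W Y (k + 1) - cfun μ W Y k) n]
    rw [Finset.sum_range_sub (fun k => cfun μ W Y k) n]
    have hn : cfun μ W Y n = ent μ Y - ent μ (fun ω => (Y ω, W ω)) := by
      rw [cfun_le μ W Y n le_rfl]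
      have h1 : (fun ω => pfx (Y ω) n le_rfl) = Y := rfl
      have h2 : (fun ω => (pfx (Y ω) n le_rfl, W ω)) = fun ω => (Y ω, W ω) := rfl
      rw [h1, h2]
    have h0 : cfun μ W Y 0 = -(ent μ W) := by
      rw [cfun_le μ W Y 0 (Nat.zero_le n)]
      rw [ent_subsingleton μ hμ1 (fun ω => pfx (Y ω) 0 (Nat.zero_le n))]
      rw [ent_pair_subsingleton μ (fun ω => pfx (Y ω) 0 (Nat.zero_le n)) W]
      ring
    rw [hn, h0, ent_swap μ Y W]
    unfold mi
    ring
  rw [hsum]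
  exact mi_key μ hμ0 hμ1 W Y

end NFB
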